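/- arXiv:2303.16525 — 2 statements merged into one kernel-verified Lean document; each statement's English description precedes it below -/
import Mathlib

section
/- Suppose ξ(·) = (ξ_α(·))_{α∈ℕⁿ} is a functional-valued map on a domain D ⊆ ℂᵐ that is locally uniformly bounded near w₀ ∈ D (i.e., for each ρ > 0 there is a neighborhood V of w₀ with sup_{w∈V} ∑_α |ξ_α(w)| ρ^{|α|} < ∞) and each ξ_α is continuous at w₀. Let V be an open set compactly contained in the z-domain, z_j ∈ V with (z_j, w_j) → (z₀, w₀), and let f_j be holomorphic functions converging compactly (uniformly on compact subsets) to f on V. Then (ξ(w_j)·f_j)(z_j) → (ξ(w₀)·f)(z₀) as j → ∞. -/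
open MeasureTheory Filter Topology Complex
open scoped ENNReal
noncomputable section

/-- The total degree `|α|` of a multi-index. -/
def mdeg {n : ℕ} (α : Fin n → ℕ) : ℕ := ∑ i, α i

/-- The factorial `α!` of a multi-index. -/
def mfact {n : ℕ} (α : Fin n → ℕ) : ℕ := ∏ i, Nat.factorial (α i)

/-- Partial derivative in the `i`-th coordinate direction. -/
def pderivC {n : ℕ} (i : Fin n) (f : (Fin n → ℂ) → ℂ) : (Fin n → ℂ) → ℂ :=
  fun z => deriv (fun t : ℂ => f (Function.update z i t)) (z i)

/-- Iterated partial derivative `∂^{|α|} f / ∂z^α`. -/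
def multiDeriv {n : ℕ} (α : Fin n → ℕ) (f : (Fin n → ℂ) → ℂ) : (Fin n → ℂ) → ℂ :=
  (List.finRange n).foldr (fun i g => (pderivC i)^[α i] g) f

/-- Membership in `ℓ₁^{(n)}`: `∑_α |ξ_α| ρ^{|α|} < ∞` for every `ρ > 0`. -/
def MemL1 {n : ℕ} (ξ : (Fin n → ℕ) → ℂ) : Prop :=
  ∀ ρ : ℝ, 0 < ρ → Summable fun α : Fin n → ℕ => ‖ξ α‖ * ρ ^ mdeg α

/-- The action `(ξ·f)(z) = ∑_α ξ_α f^{(α)}(z)/α!`. -/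
def xiAct {n : ℕ} (ξ : (Fin n → ℕ) → ℂ) (f : (Fin n → ℂ) → ℂ) (z : Fin n → ℂ) : ℂ :=
  ∑' α : Fin n → ℕ, ξ α * multiDeriv α f z / (mfact α : ℂ)

/-- Plurisubharmonicity of an `EReal`-valued function on a set: upper semicontinuity
together with the sub-mean value inequality on every complex circle whose closed disc
is contained in the set (expressed via integrable real-valued majorants). -/
def PlurisubharmonicOn {E : Type*} [NormedAddCommGroup E] [NormedSpace ℂ E]
    (f : E → EReal) (s : Set E) : Prop :=
  UpperSemicontinuousOn f s ∧
  ∀ z ∈ s, ∀ v : E, (∀ t : ℂ, ‖t‖ ≤ 1 → z + t • v ∈ s) →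
    ∀ g : ℝ → ℝ, IntervalIntegrable g volume 0 (2 * Real.pi) →
      (∀ θ : ℝ, f (z + Complex.exp (θ * Complex.I) • v) ≤ (g θ : EReal)) →
      f z ≤ (((2 * Real.pi)⁻¹ * ∫ θ in (0:ℝ)..(2 * Real.pi), g θ : ℝ) : EReal)

/-- The weighted `L²` integral `∫_D |f|² e^{-ψ}`. -/
def wL2 {n : ℕ} (D : Set (Fin n → ℂ)) (ψ : (Fin n → ℂ) → ℝ) (f : (Fin n → ℂ) → ℂ) : ℝ≥0∞ :=
  ∫⁻ z in D, ENNReal.ofReal (‖f z‖ ^ 2 * Real.exp (-ψ z))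

/-- Membership in the weighted Bergman space `A²(D, e^{-ψ})`. -/
def MemA2 {n : ℕ} (D : Set (Fin n → ℂ)) (ψ : (Fin n → ℂ) → ℝ) (f : (Fin n → ℂ) → ℂ) : Prop :=
  DifferentiableOn ℂ f D ∧ wL2 D ψ f < ⊤

/-- The weighted `ξ`-Bergman kernel `K^ψ_{ξ,D}(z)`. -/
def xiBergman {n : ℕ} (ξ : (Fin n → ℕ) → ℂ) (D : Set (Fin n → ℂ))
    (ψ : (Fin n → ℂ) → ℝ) (z : Fin n → ℂ) : ℝ≥0∞ :=
  ⨆ f : {f // MemA2 D ψ f}, ENNReal.ofReal (‖xiAct ξ f.1 z‖ ^ 2) / wL2 D ψ f.1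

/-- The locally uniformly bounded property for a functional-valued function on `D`. -/
def LocUnifBdd {n m : ℕ} (ξ : (Fin m → ℂ) → (Fin n → ℕ) → ℂ) (D : Set (Fin m → ℂ)) : Prop :=
  ∀ w ∈ D, ∀ ρ : ℝ, 0 < ρ → ∃ V ∈ 𝓝 w, ∃ C : ℝ,
    ∀ w' ∈ V ∩ D, (∑' α : Fin n → ℕ, ENNReal.ofReal (‖ξ w' α‖ * ρ ^ mdeg α)) ≤ ENNReal.ofReal C

/-!
Write `(ξ·f)(z) = ∑_α ξ_α ∂^α f(z) / α!` and pass to the limit by dominated convergence over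
`α ∈ ℕⁿ`. Termwise, `ξ_α(w_j) → ξ_α(w₀)` by hypothesis, and `∂^α f_j(z_j) → ∂^α f(z₀)` because
Cauchy's estimate on polydiscs of radius `R` makes the derivatives of a uniformly convergent
sequence converge uniformly (Weierstrass). The same estimate `|∂^α f_j(z_j)| / α! ≤ M R^{-|α|}`,
combined with the bound `|ξ_α(w)| (2/R)^{|α|} ≤ C` for `w` near `w₀`, dominates the `α`-th term
by `C M 2^{-|α|}`, which is summable over `ℕⁿ`.

Iterated partial derivatives are controlled within the class of continuous, separately
holomorphic functions; its stability under `∂/∂z_i` comes from the uniform convergence of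
difference quotients, a consequence of the Schwarz lemma.
-/

open Function Metric Set

lemma norm_dslope_sub_deriv_le {E : Type*} [NormedAddCommGroup E] [NormedSpace ℂ E]
    [CompleteSpace E] {φ : ℂ → E} {c t : ℂ} {r M : ℝ}
    (hφ : DifferentiableOn ℂ φ (ball c r)) (hM : ∀ s ∈ ball c r, ‖φ s‖ ≤ M)
    (ht : t ∈ ball c r) :
    ‖dslope φ c t - deriv φ c‖ ≤ 4 * M / r ^ 2 * ‖t - c‖ := by
  have hr : 0 < r := pos_of_mem_ball ht
  have hc : c ∈ ball c r := mem_ball_self hr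
  have hφ_maps : MapsTo φ (ball c r) (closedBall (φ c) (2 * M)) := fun s hs => by
    rw [mem_closedBall, dist_eq_norm]
    linarith [norm_sub_le (φ s) (φ c), hM s hs, hM c hc]
  -- Schwarz: `dslope φ c` is bounded by `2M/r`, and Schwarz again turns that into Lipschitz at `c`.
  have hψ_le : ∀ s ∈ ball c r, ‖dslope φ c s‖ ≤ 2 * M / r := fun s hs =>
    Complex.norm_dslope_le_div_of_mapsTo_ball hφ hφ_maps hs
  have hψ_maps : MapsTo (dslope φ c) (ball c r) (closedBall (dslope φ c c) (4 * M / r)) :=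
    fun s hs => by
      rw [mem_closedBall, dist_eq_norm]
      have : 4 * M / r = 2 * M / r + 2 * M / r := by ring
      linarith [norm_sub_le (dslope φ c s) (dslope φ c c), hψ_le s hs, hψ_le c hc]
  have hψ : DifferentiableOn ℂ (dslope φ c) (ball c r) :=
    (Complex.differentiableOn_dslope (isOpen_ball.mem_nhds hc)).2 hφ
  have := Complex.dist_le_div_mul_dist_of_mapsTo_ball hψ hψ_maps ht
  rw [dslope_same, dist_eq_norm, dist_eq_norm] at this
  calc _ ≤ 4 * M / r / r * ‖t - c‖ := this
    _ = 4 * M / r ^ 2 * ‖t - c‖ := by rw [div_div, sq]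

lemma update_add_eq {n : ℕ} (z v : Fin n → ℂ) (i : Fin n) (s : ℂ) :
    update z i s + v = update (z + v) i (s + v i) := by
  ext j
  by_cases hj : j = i
  · subst hj; simp
  · simp [update_of_ne hj]

lemma update_add_self_eq {n : ℕ} (x : Fin n → ℂ) (i : Fin n) (η : ℂ) :
    update x i (x i + η) = x + η • Pi.single i 1 := by
  ext j
  by_cases hj : j = i
  · subst hj; simp
  · simp [hj]

lemma update_mem_closedBall {n : ℕ} {x c : Fin n → ℂ} {r : ℝ} {i : Fin n} {t : ℂ}
    (hx : x ∈ closedBall c r) (ht : t ∈ closedBall (c i) r) : update x i t ∈ closedBall c r := by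
  rw [mem_closedBall] at *
  refine (dist_pi_le_iff (dist_nonneg.trans ht)).2 fun j => ?_
  by_cases hj : j = i
  · subst hj; simpa using ht
  · rw [update_of_ne hj]; exact (dist_le_pi_dist x c j).trans hx

lemma add_smul_single_mem_closedBall {n : ℕ} {x c : Fin n → ℂ} {δ : ℝ} {i : Fin n} {η : ℂ}
    (hx : x ∈ closedBall c δ) (hη : ‖η‖ ≤ δ) :
    x + η • Pi.single i 1 ∈ closedBall c (2 * δ) := by
  rw [mem_closedBall] at *
  calc dist (x + η • Pi.single i 1) c ≤ ‖η • (Pi.single i 1 : Fin n → ℂ)‖ + dist x c :=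
        (dist_triangle _ x c).trans (by rw [dist_self_add_left])
    _ ≤ 2 * δ := by rw [norm_smul, Pi.norm_single, norm_one, mul_one]; linarith

lemma exists_pos_closedBall_two_mul_subset {X : Type*} [PseudoMetricSpace X] {U : Set X}
    (hU : IsOpen U) {x : X} (hx : x ∈ U) : ∃ r > 0, closedBall x (2 * r) ⊆ U := by
  obtain ⟨r, hr, hrU⟩ := Metric.isOpen_iff.1 hU x hx
  exact ⟨r / 3, by positivity, (closedBall_subset_ball (by linarith)).trans hrU⟩

lemma mfact_pos {n : ℕ} (α : Fin n → ℕ) : 0 < mfact α :=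
  Finset.prod_pos fun _ _ => Nat.factorial_pos _

lemma iterate_pderivC_update {n : ℕ} (G : (Fin n → ℂ) → ℂ) (y : Fin n → ℂ) (i : Fin n) :
    ∀ m, (fun t => (pderivC i)^[m] G (update y i t)) = iteratedDeriv m fun t => G (update y i t)
  | 0 => by simp
  | m + 1 => by
    funext t
    rw [iterate_succ_apply', iteratedDeriv_succ, ← iterate_pderivC_update G y i m]
    simp [pderivC]

/-- By Osgood's lemma this is the same as holomorphy, but unlike holomorphy its stability under
`pderivC` needs only one-variable theory. -/
def SepHolomorphicOn {n : ℕ} (h : (Fin n → ℂ) → ℂ) (U : Set (Fin n → ℂ)) : Prop :=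
  ContinuousOn h U ∧ ∀ z ∈ U, ∀ i, DifferentiableAt ℂ (fun t => h (update z i t)) (z i)

lemma DifferentiableOn.sepHolomorphicOn {n : ℕ} {U : Set (Fin n → ℂ)} {h : (Fin n → ℂ) → ℂ}
    (hh : DifferentiableOn ℂ h U) (hU : IsOpen U) : SepHolomorphicOn h U := by
  refine ⟨hh.continuousOn, fun z hz i => ?_⟩
  have hd : DifferentiableAt ℂ h (update z i (z i)) := by
    rw [update_eq_self]; exact hh.differentiableAt (hU.mem_nhds hz)
  exact hd.comp (z i) (hasFDerivAt_update z (z i)).differentiableAt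

namespace SepHolomorphicOn

variable {n : ℕ} {U : Set (Fin n → ℂ)} {h : (Fin n → ℂ) → ℂ}

lemma differentiableOn_slice (hh : SepHolomorphicOn h U) (z : Fin n → ℂ) (i : Fin n) :
    DifferentiableOn ℂ (fun t => h (update z i t)) {t | update z i t ∈ U} := fun t ht => by
  simpa using (hh.2 _ ht i).differentiableWithinAt

lemma differentiableOn_slice_add (hh : SepHolomorphicOn h U) (z v : Fin n → ℂ) (i : Fin n) :
    DifferentiableOn ℂ (fun s => h (update z i s + v)) {s | update z i s + v ∈ U} := by
  simp_rw [update_add_eq]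
  exact (hh.differentiableOn_slice (z + v) i).comp (differentiableOn_id.add_const _)
    fun s hs => by simpa [update_add_eq] using hs

lemma sub {G : (Fin n → ℂ) → ℂ} (hh : SepHolomorphicOn h U) (hG : SepHolomorphicOn G U) :
    SepHolomorphicOn (h - G) U :=
  ⟨hh.1.sub hG.1, fun z hz i => (hh.2 z hz i).sub (hG.2 z hz i)⟩

lemma tendstoUniformlyOn_diffQuot (hh : SepHolomorphicOn h U) (i : Fin n) {z₀ : Fin n → ℂ}
    {δ : ℝ} (hδ : 0 < δ) (hsub : closedBall z₀ (2 * δ) ⊆ U) :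
    TendstoUniformlyOn (fun (η : ℂ) x => η⁻¹ * (h (x + η • Pi.single i 1) - h x))
      (pderivC i h) (𝓝[≠] 0) (closedBall z₀ δ) := by
  obtain ⟨M, hM⟩ := (isCompact_closedBall z₀ (2 * δ)).exists_bound_of_continuousOn (hh.1.mono hsub)
  have hslice : ∀ x ∈ closedBall z₀ δ, ∀ t ∈ ball (x i) δ,
      update x i t ∈ closedBall z₀ (2 * δ) := fun x hx t ht => by
    refine update_mem_closedBall (closedBall_subset_closedBall (by linarith) hx) ?_
    rw [mem_closedBall] at hx ⊢
    linarith [dist_triangle t (x i) (z₀ i), dist_le_pi_dist x z₀ i, mem_ball.1 ht]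
  have hlim : Tendsto (fun η : ℂ => 4 * M / δ ^ 2 * ‖η‖) (𝓝[≠] 0) (𝓝 0) := by
    refine tendsto_nhdsWithin_of_tendsto_nhds ?_
    simpa using (tendsto_norm_zero (E := ℂ)).const_mul (4 * M / δ ^ 2)
  rw [Metric.tendstoUniformlyOn_iff]
  intro ε hε
  filter_upwards [self_mem_nhdsWithin, hlim.eventually (gt_mem_nhds hε),
    nhdsWithin_le_nhds (ball_mem_nhds 0 hδ)] with η hη₀ hηε hηδ x hx
  have hφ : DifferentiableOn ℂ (fun t => h (update x i t)) (ball (x i) δ) :=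
    (hh.differentiableOn_slice x i).mono fun t ht => hsub (hslice x hx t ht)
  have hmem : x i + η ∈ ball (x i) δ := by simpa using hηδ
  have key := norm_dslope_sub_deriv_le hφ (fun t ht => hM _ (hslice x hx t ht)) hmem
  have hq : dslope (fun t => h (update x i t)) (x i) (x i + η)
      = η⁻¹ * (h (x + η • Pi.single i 1) - h x) := by
    rw [dslope_of_ne _ (by simpa using hη₀), slope_def_field, update_add_self_eq, update_eq_self,
      add_sub_cancel_left, div_eq_inv_mul]
  rw [dist_eq_norm', ← hq]
  rw [add_sub_cancel_left] at key
  exact key.trans_lt hηε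

lemma pderivC (hh : SepHolomorphicOn h U) (hU : IsOpen U) (i : Fin n) :
    SepHolomorphicOn (_root_.pderivC i h) U := by
  have hlocal : ∀ z₀ ∈ U, ∃ δ > 0, ContinuousOn (_root_.pderivC i h) (closedBall z₀ δ) ∧
      ∀ i', DifferentiableOn ℂ (fun s => _root_.pderivC i h (update z₀ i' s))
        (ball (z₀ i') δ) := by
    -- Near `z₀`, `pderivC i h` is a uniform limit of difference quotients, which are continuous
    -- and separately holomorphic there.
    intro z₀ hz₀
    obtain ⟨δ, hδ, hsub⟩ := exists_pos_closedBall_two_mul_subset hU hz₀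
    have hsub' : closedBall z₀ δ ⊆ U := (closedBall_subset_closedBall (by linarith)).trans hsub
    have T := hh.tendstoUniformlyOn_diffQuot i hδ hsub
    have hsmall : ∀ᶠ η in 𝓝[≠] (0 : ℂ), ‖η‖ ≤ δ := nhdsWithin_le_nhds
      (mem_of_superset (closedBall_mem_nhds 0 hδ) fun η hη => by simpa using hη)
    refine ⟨δ, hδ, T.continuousOn (hsmall.mono fun η hη => ?_).frequently, fun i' => ?_⟩
    · exact continuousOn_const.mul ((hh.1.comp (continuous_add_const _).continuousOn
        fun x hx => hsub (add_smul_single_mem_closedBall hx hη)).sub (hh.1.mono hsub'))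
    have hline : MapsTo (fun s => update z₀ i' s) (ball (z₀ i') δ) (closedBall z₀ δ) :=
      fun s hs => update_mem_closedBall (mem_closedBall_self hδ.le) (ball_subset_closedBall hs)
    refine (((T.comp _).mono fun s hs => hline hs).tendstoLocallyUniformlyOn.differentiableOn
      ?_ isOpen_ball)
    filter_upwards [hsmall] with η hη
    exact (differentiableOn_const _).mul (((hh.differentiableOn_slice_add z₀ _ i').mono
      fun s hs => hsub (add_smul_single_mem_closedBall (hline hs) hη)).sub
      ((hh.differentiableOn_slice z₀ i').mono fun s hs => hsub' (hline hs)))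
  refine ⟨fun z hz => ?_, fun z hz i' => ?_⟩ <;> obtain ⟨δ, hδ, hcont, hdiff⟩ := hlocal z hz
  · exact (hcont.continuousAt (closedBall_mem_nhds z hδ)).continuousWithinAt
  · exact (hdiff i').differentiableAt (ball_mem_nhds _ hδ)

lemma iterate_pderivC (hh : SepHolomorphicOn h U) (hU : IsOpen U) (i : Fin n) (m : ℕ) :
    SepHolomorphicOn ((_root_.pderivC i)^[m] h) U :=
  Iterate.rec (SepHolomorphicOn · U) hh (fun _ hG => hG.pderivC hU i) m

lemma foldr_iterate_pderivC (hh : SepHolomorphicOn h U) (hU : IsOpen U) (α : Fin n → ℕ) :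
    ∀ l : List (Fin n),
      SepHolomorphicOn (l.foldr (fun i G => (_root_.pderivC i)^[α i] G) h) U
  | [] => hh
  | i :: l => (foldr_iterate_pderivC hh hU α l).iterate_pderivC hU i (α i)

lemma multiDeriv (hh : SepHolomorphicOn h U) (hU : IsOpen U) (α : Fin n → ℕ) :
    SepHolomorphicOn (_root_.multiDeriv α h) U :=
  hh.foldr_iterate_pderivC hU α _

lemma norm_iterate_pderivC_le (hh : SepHolomorphicOn h U) {y : Fin n → ℂ} {i : Fin n}
    {r M : ℝ} (hr : 0 < r) (hU : ∀ t ∈ closedBall (y i) r, update y i t ∈ U)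
    (hM : ∀ t ∈ sphere (y i) r, ‖h (update y i t)‖ ≤ M) (m : ℕ) :
    ‖(_root_.pderivC i)^[m] h y‖ ≤ m.factorial * M / r ^ m := by
  have hd := ((hh.differentiableOn_slice y i).mono hU).diffContOnCl_ball subset_rfl
  have := Complex.norm_iteratedDeriv_le_of_forall_mem_sphere_norm_le m hr hd hM
  simpa [← iterate_pderivC_update] using this

/-- Cauchy's estimate on the polydisc `closedBall c r`. -/
lemma norm_multiDeriv_le (hh : SepHolomorphicOn h U) (hU : IsOpen U) {c : Fin n → ℂ}
    {r M : ℝ} (hr : 0 < r) (hsub : closedBall c r ⊆ U) (hM : ∀ x ∈ closedBall c r, ‖h x‖ ≤ M)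
    (α : Fin n → ℕ) : ‖_root_.multiDeriv α h c‖ ≤ M * mfact α / r ^ mdeg α := by
  -- Differentiate one coordinate at a time, keeping the coordinates already used pinned at `c`.
  have key : ∀ l : List (Fin n), l.Nodup → ∀ y ∈ closedBall c r, (∀ j ∈ l, y j = c j) →
      ‖l.foldr (fun i G => (_root_.pderivC i)^[α i] G) h y‖
        ≤ M * (l.map fun j => ((α j).factorial : ℝ) / r ^ α j).prod := by
    intro l
    induction l with
    | nil => intro _ y hy _; simpa using hM y hy
    | cons j l ih =>
      intro hnd y hy hyc
      rw [List.nodup_cons] at hnd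
      have hupd : ∀ t ∈ closedBall (y j) r, update y j t ∈ closedBall c r := fun t ht =>
        update_mem_closedBall hy (hyc j List.mem_cons_self ▸ ht)
      refine ((hh.foldr_iterate_pderivC hU α l).norm_iterate_pderivC_le hr
        (fun t ht => hsub (hupd t ht)) (fun t ht => ih hnd.2 _ (hupd t (sphere_subset_closedBall ht))
          fun k hk => ?_) (α j)).trans_eq (by simp only [List.map_cons, List.prod_cons]; ring)
      rw [update_of_ne (ne_of_mem_of_not_mem hk hnd.1)]
      exact hyc k (List.mem_cons_of_mem _ hk)
  have := key _ (List.nodup_finRange n) c (mem_closedBall_self hr.le) fun _ _ => rfl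
  rw [← Fin.prod_univ_def, Finset.prod_div_distrib, Finset.prod_pow_eq_pow_sum] at this
  simpa [_root_.multiDeriv, mfact, mdeg, mul_div_assoc] using this

end SepHolomorphicOn

section Linearity

variable {n : ℕ} {U : Set (Fin n → ℂ)} {F G H : (Fin n → ℂ) → ℂ}

lemma eqOn_pderivC_sub (hU : IsOpen U) (hG : SepHolomorphicOn G U) (hH : SepHolomorphicOn H U)
    (hF : EqOn F (G - H) U) (i : Fin n) : EqOn (pderivC i F) (pderivC i G - pderivC i H) U := by
  intro z hz
  have hslice : {t | update z i t ∈ U} ∈ 𝓝 (z i) :=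
    (hU.preimage (continuous_const.update i continuous_id)).mem_nhds (by simpa using hz)
  have hev : (fun t => F (update z i t)) =ᶠ[𝓝 (z i)]
      fun t => G (update z i t) - H (update z i t) :=
    Filter.mem_of_superset hslice fun t ht => hF ht
  exact hev.deriv_eq.trans (deriv_fun_sub (hG.2 z hz i) (hH.2 z hz i))

lemma eqOn_iterate_pderivC_sub (hU : IsOpen U) (hG : SepHolomorphicOn G U)
    (hH : SepHolomorphicOn H U) (hF : EqOn F (G - H) U) (i : Fin n) :
    ∀ m, EqOn ((pderivC i)^[m] F) ((pderivC i)^[m] G - (pderivC i)^[m] H) U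
  | 0 => hF
  | m + 1 => by
    simp only [iterate_succ_apply']
    exact eqOn_pderivC_sub hU (hG.iterate_pderivC hU i m) (hH.iterate_pderivC hU i m)
      (eqOn_iterate_pderivC_sub hU hG hH hF i m) i

lemma eqOn_multiDeriv_sub (hU : IsOpen U) (hG : SepHolomorphicOn G U)
    (hH : SepHolomorphicOn H U) (α : Fin n → ℕ) :
    EqOn (multiDeriv α (G - H)) (multiDeriv α G - multiDeriv α H) U := by
  suffices ∀ l : List (Fin n), EqOn (l.foldr (fun i K => (pderivC i)^[α i] K) (G - H))
      (l.foldr (fun i K => (pderivC i)^[α i] K) G - l.foldr (fun i K => (pderivC i)^[α i] K) H) U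
    from this _
  intro l
  induction l with
  | nil => exact fun _ _ => rfl
  | cons i l ih =>
    exact eqOn_iterate_pderivC_sub hU (hG.foldr_iterate_pderivC hU α l)
      (hH.foldr_iterate_pderivC hU α l) ih i (α i)

end Linearity

section Convergence

variable {n : ℕ} {U : Set (Fin n → ℂ)} {ι : Type*} {p : Filter ι}
  {f : ι → (Fin n → ℂ) → ℂ} {g : (Fin n → ℂ) → ℂ}

lemma tendstoUniformlyOn_multiDeriv (hU : IsOpen U) (hf : ∀ j, SepHolomorphicOn (f j) U)
    (hg : SepHolomorphicOn g U) {c : Fin n → ℂ} {r : ℝ} (hr : 0 < r)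
    (hsub : closedBall c (2 * r) ⊆ U) (hfg : TendstoUniformlyOn f g p (closedBall c (2 * r)))
    (α : Fin n → ℕ) :
    TendstoUniformlyOn (fun j => multiDeriv α (f j)) (multiDeriv α g) p (closedBall c r) := by
  have hC : 0 < (mfact α : ℝ) / r ^ mdeg α :=
    div_pos (Nat.cast_pos.2 (mfact_pos α)) (by positivity)
  rw [Metric.tendstoUniformlyOn_iff] at hfg ⊢
  intro ε hε
  filter_upwards [hfg (ε / 2 / (mfact α / r ^ mdeg α)) (by positivity)] with j hj y hy
  have hball : closedBall y r ⊆ closedBall c (2 * r) :=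
    closedBall_subset_closedBall' (by linarith [mem_closedBall.1 hy])
  have hbound := ((hf j).sub hg).norm_multiDeriv_le hU hr (hball.trans hsub)
    (fun x hx => by rw [Pi.sub_apply, ← dist_eq_norm']; exact (hj x (hball hx)).le) α
  rw [eqOn_multiDeriv_sub hU (hf j) hg α (hball.trans hsub (mem_closedBall_self hr.le))]
    at hbound
  rw [dist_eq_norm']
  calc _ ≤ _ := hbound
    _ = ε / 2 := by rw [mul_div_assoc, div_mul_cancel₀ _ hC.ne']
    _ < ε := half_lt_self hε

lemma tendsto_multiDeriv_apply (hU : IsOpen U) (hf : ∀ j, SepHolomorphicOn (f j) U)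
    (hg : SepHolomorphicOn g U) (hfg : TendstoLocallyUniformlyOn f g p U)
    {z : ι → Fin n → ℂ} {z₀ : Fin n → ℂ} (hz₀ : z₀ ∈ U) (hz : Tendsto z p (𝓝 z₀))
    (α : Fin n → ℕ) : Tendsto (fun j => multiDeriv α (f j) (z j)) p (𝓝 (multiDeriv α g z₀)) := by
  obtain ⟨r, hr, hsub⟩ := exists_pos_closedBall_two_mul_subset hU hz₀
  have hK := (tendstoLocallyUniformlyOn_iff_forall_isCompact hU).1 hfg _ hsub
    (isCompact_closedBall _ _)
  refine (tendstoUniformlyOn_multiDeriv hU hf hg hr hsub hK α).tendsto_comp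
    (((hg.multiDeriv hU α).1 z₀ hz₀).mono fun x hx => hsub (closedBall_subset_closedBall
      (by linarith) hx))
    (tendsto_nhdsWithin_iff.2 ⟨hz, hz (closedBall_mem_nhds z₀ hr)⟩)

end Convergence

lemma TendstoUniformlyOn.exists_eventually_norm_le {X E ι : Type*} [TopologicalSpace X]
    [NormedAddCommGroup E] {p : Filter ι} {f : ι → X → E} {g : X → E} {K : Set X}
    (hfg : TendstoUniformlyOn f g p K) (hK : IsCompact K) (hg : ContinuousOn g K) :
    ∃ M, ∀ᶠ j in p, ∀ x ∈ K, ‖f j x‖ ≤ M := by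
  obtain ⟨M, hM⟩ := hK.exists_bound_of_continuousOn hg
  refine ⟨M + 1, ?_⟩
  filter_upwards [Metric.tendstoUniformlyOn_iff.1 hfg 1 one_pos] with j hj x hx
  have := hj x hx
  rw [dist_eq_norm'] at this
  linarith [norm_le_norm_add_norm_sub' (f j x) (g x), hM x hx]

lemma summable_pow_mdeg {q : ℝ} (hq₀ : 0 ≤ q) (hq₁ : q < 1) :
    ∀ n : ℕ, Summable fun α : Fin n → ℕ => q ^ mdeg α
  | 0 => .of_finite
  | n + 1 => by
    rw [← (Fin.consEquiv fun _ => ℕ).summable_iff]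
    have h := (summable_geometric_of_lt_one hq₀ hq₁).mul_of_nonneg
      (summable_pow_mdeg hq₀ hq₁ n) (fun _ => pow_nonneg hq₀ _) (fun _ => pow_nonneg hq₀ _)
    refine h.congr fun p => ?_
    simp [mdeg, Fin.sum_univ_succ, pow_add, Fin.consEquiv]

lemma le_max_zero_of_tsum_ofReal_le {ι : Type*} {a : ι → ℝ} {C : ℝ}
    (h : ∑' k, ENNReal.ofReal (a k) ≤ ENNReal.ofReal C) (k : ι) : a k ≤ max C 0 := by
  rcases ENNReal.ofReal_le_ofReal_iff'.1 ((ENNReal.le_tsum k).trans h) with h' | h'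
  · exact h'.trans (le_max_left _ _)
  · exact h'.trans (le_max_right _ _)

lemma norm_mul_div_le_of_weighted_bounds {a D : ℂ} {k d : ℕ} {C M R : ℝ} (hR : 0 < R)
    (hk : 0 < k) (ha : ‖a‖ * (2 / R) ^ d ≤ C) (hD : ‖D‖ ≤ M * k / R ^ d) :
    ‖a * D / k‖ ≤ C * M * (1 / 2) ^ d := by
  have hk' : (0 : ℝ) < k := Nat.cast_pos.2 hk
  have hM : 0 ≤ M := by
    have := (norm_nonneg D).trans hD
    rwa [mul_div_assoc, mul_nonneg_iff_of_pos_right (by positivity)] at this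
  rw [norm_div, norm_mul, Complex.norm_natCast, div_le_iff₀ hk']
  calc ‖a‖ * ‖D‖ ≤ ‖a‖ * (M * k / R ^ d) := mul_le_mul_of_nonneg_left hD (norm_nonneg a)
    _ = ‖a‖ * (2 / R) ^ d * (M * (1 / 2) ^ d) * k := by
        field_simp
        rw [div_pow, one_div_pow]
        field_simp
    _ ≤ C * (M * (1 / 2) ^ d) * k := by gcongr
    _ = C * M * (1 / 2) ^ d * k := by ring

theorem statement3_general {n m : ℕ} (D : Set (Fin m → ℂ))
    (ξ : (Fin m → ℂ) → (Fin n → ℕ) → ℂ)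
    (w₀ : Fin m → ℂ)
    (hlub : ∀ ρ : ℝ, 0 < ρ → ∃ V ∈ 𝓝 w₀, ∃ C : ℝ, ∀ w ∈ V ∩ D,
      (∑' α : Fin n → ℕ, ENNReal.ofReal (‖ξ w α‖ * ρ ^ mdeg α)) ≤ ENNReal.ofReal C)
    (hcont : ∀ α : Fin n → ℕ, ContinuousWithinAt (fun w => ξ w α) D w₀)
    (V : Set (Fin n → ℂ)) (hVo : IsOpen V)
    (f : ℕ → (Fin n → ℂ) → ℂ) (hf : ∀ j, DifferentiableOn ℂ (f j) V)
    (g : (Fin n → ℂ) → ℂ) (hg : DifferentiableOn ℂ g V)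
    (hconv : TendstoLocallyUniformlyOn (fun j => f j) g atTop V)
    (z : ℕ → Fin n → ℂ) (z₀ : Fin n → ℂ) (hz₀ : z₀ ∈ V)
    (hzlim : Filter.Tendsto z atTop (𝓝 z₀))
    (w : ℕ → Fin m → ℂ) (hw : ∀ j, w j ∈ D)
    (hwlim : Filter.Tendsto w atTop (𝓝 w₀)) :
    Filter.Tendsto (fun j => xiAct (ξ (w j)) (f j) (z j)) atTop
      (𝓝 (xiAct (ξ w₀) g z₀)) := by
  obtain ⟨R, hR, hRV⟩ := exists_pos_closedBall_two_mul_subset hVo hz₀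
  have hfs j := (hf j).sepHolomorphicOn hVo
  have hgs := hg.sepHolomorphicOn hVo
  obtain ⟨M, hM⟩ := ((tendstoLocallyUniformlyOn_iff_forall_isCompact hVo).1 hconv _ hRV
    (isCompact_closedBall _ _)).exists_eventually_norm_le (isCompact_closedBall _ _)
    (hg.continuousOn.mono hRV)
  obtain ⟨W, hW, C, hC⟩ := hlub (2 / R) (by positivity)
  have hwD : Tendsto w atTop (𝓝[D] w₀) := tendsto_nhdsWithin_iff.2 ⟨hwlim, .of_forall hw⟩
  refine tendsto_tsum_of_dominated_convergence (bound := fun α => max C 0 * M * (1 / 2) ^ mdeg α)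
    ((summable_pow_mdeg (by norm_num) (by norm_num) n).mul_left _)
    (fun α => (((hcont α).tendsto.comp hwD).mul
      (tendsto_multiDeriv_apply hVo hfs hgs hconv hz₀ hzlim α)).div_const _) ?_
  filter_upwards [hM, hzlim (closedBall_mem_nhds z₀ hR), hwlim hW] with j hMj hzj hwj α
  have hball : closedBall (z j) R ⊆ closedBall z₀ (2 * R) :=
    closedBall_subset_closedBall' (by linarith [mem_closedBall.1 hzj])
  exact norm_mul_div_le_of_weighted_bounds hR (mfact_pos α)
    (le_max_zero_of_tsum_ofReal_le (hC _ ⟨hwj, hw j⟩) α)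
    ((hfs j).norm_multiDeriv_le hVo hR (hball.trans hRV) (fun x hx => hMj x (hball hx)) α)

/-- Continuity of the pairing `(w, f, z) ↦ (ξ(w)·f)(z)` along sequences: if `ξ(·)` is locally
uniformly bounded near `w₀`, each coefficient is continuous at `w₀`, `z_j → z₀` inside a
relatively compact open set `V`, and `f_j → f` compactly on `V`, then
`(ξ(w_j)·f_j)(z_j) → (ξ(w₀)·f)(z₀)`. -/
theorem statement3 {n m : ℕ} (D : Set (Fin m → ℂ)) (hDo : IsOpen D)
    (ξ : (Fin m → ℂ) → (Fin n → ℕ) → ℂ) (hmem : ∀ w ∈ D, MemL1 (ξ w))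
    (w₀ : Fin m → ℂ) (hw₀ : w₀ ∈ D)
    (hlub : ∀ ρ : ℝ, 0 < ρ → ∃ V ∈ 𝓝 w₀, ∃ C : ℝ, ∀ w ∈ V ∩ D,
      (∑' α : Fin n → ℕ, ENNReal.ofReal (‖ξ w α‖ * ρ ^ mdeg α)) ≤ ENNReal.ofReal C)
    (hcont : ∀ α : Fin n → ℕ, ContinuousWithinAt (fun w => ξ w α) D w₀)
    (V : Set (Fin n → ℂ)) (hVo : IsOpen V) (hVc : IsCompact (closure V))
    (f : ℕ → (Fin n → ℂ) → ℂ) (hf : ∀ j, DifferentiableOn ℂ (f j) V)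
    (g : (Fin n → ℂ) → ℂ) (hg : DifferentiableOn ℂ g V)
    (hconv : TendstoLocallyUniformlyOn (fun j => f j) g atTop V)
    (z : ℕ → Fin n → ℂ) (hz : ∀ j, z j ∈ V) (z₀ : Fin n → ℂ) (hz₀ : z₀ ∈ V)
    (hzlim : Filter.Tendsto z atTop (𝓝 z₀))
    (w : ℕ → Fin m → ℂ) (hw : ∀ j, w j ∈ D)
    (hwlim : Filter.Tendsto w atTop (𝓝 w₀)) :
    Filter.Tendsto (fun j => xiAct (ξ (w j)) (f j) (z j)) atTop
      (𝓝 (xiAct (ξ w₀) g z₀)) :=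
  statement3_general D ξ w₀ hlub hcont V hVo f hf g hg hconv z z₀ hz₀ hzlim w hw hwlim
end
end

section
/- Let p ≤ q be positive integers and let A(w) = (a_{ij}(w)) be a p × q matrix of holomorphic functions on the polydisc Δᵐ ⊆ ℂᵐ. Let r := max_{w∈Δᵐ} rank A(w). Then there exist an open subset U ⊆ Δᵐ whose complement Δᵐ \ U is an analytic subset of Δᵐ, and a (p−r) × p matrix B(w) of holomorphic functions on Δᵐ, such that for every w ∈ U the sequence ℂ^q → ℂ^p → ℂ^{p−r} → 0 given by multiplication by A(w) and B(w) is exact, i.e., Im A(w) = Ker B(w) and B(w) is surjective. -/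
/-!
Pick `w₀` where `A` attains its maximal rank `r` and an `r × r` minor `M(w) = A(w)[f, g]` with
`det M(w₀) ≠ 0`, and let `U` be where `d := det M` does not vanish. With `e` the remaining
`p - r` rows, `B := d • Eₑ - A[e, g] · adj M · E_f` (where `Eₑ`, `E_f` select rows) is
holomorphic. Since `adj M · M = d • 1`, `B` kills the columns `g` of `A`, and since
`B · Eₑᵀ = d • 1`, `B` is onto where `d ≠ 0`. There the columns `g` are independent, hence
span `Im A` by maximality of `r`, and rank–nullity gives `dim ker B = r = dim Im A`.
-/

noncomputable section

/-- The unit polydisc in `ℂᵐ`. -/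
def polydisc (m : ℕ) : Set (Fin m → ℂ) := {w | ∀ i, ‖w i‖ < 1}

/-- `S` is an analytic subset of `Δ`: the common zero set in `Δ` of a family of
functions holomorphic on `Δ`. -/
def AnalyticSubsetOf {m : ℕ} (S Δ : Set (Fin m → ℂ)) : Prop :=
  ∃ (ι : Type) (g : ι → (Fin m → ℂ) → ℂ), (∀ i, DifferentiableOn ℂ (g i) Δ) ∧
    S = {w ∈ Δ | ∀ i, g i w = 0}

open Matrix Module Submodule Function

section Minors

variable {K V ι : Type*} [Field K] [AddCommGroup V] [Module K V]

theorem exists_linearIndependent_comp_fin [Finite ι] (v : ι → V) {r : ℕ}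
    (hr : finrank K (span K (Set.range v)) = r) :
    ∃ g : Fin r → ι, LinearIndependent K (v ∘ g) := by
  obtain ⟨κ, a, ha, hspan, hli⟩ := exists_linearIndependent' K v
  have : Finite κ := Finite.of_injective a ha
  have := Fintype.ofFinite κ
  have hcard : Fintype.card κ = r := by
    rw [← hr, ← hspan, finrank_span_eq_card hli]
  exact ⟨a ∘ (Fintype.equivFinOfCardEq hcard).symm, hli.comp _ (Equiv.injective _)⟩

theorem exists_det_submatrix_ne_zero {m n : Type*} [Fintype m] [Fintype n] (A : Matrix m n K) :
    ∃ (f : Fin A.rank → m) (g : Fin A.rank → n), (A.submatrix f g).det ≠ 0 := by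
  obtain ⟨g, hg⟩ := exists_linearIndependent_comp_fin A.col A.rank_eq_finrank_span_cols.symm
  have hrank : (A.submatrix id g).rank = A.rank := by
    rw [← rank_transpose, LinearIndependent.rank_matrix (M := (A.submatrix id g)ᵀ) hg,
      Fintype.card_fin]
  obtain ⟨f, hf⟩ := exists_linearIndependent_comp_fin (A.submatrix id g).row
    (by rw [← rank_eq_finrank_span_row, hrank])
  exact ⟨f, g,
    ((isUnit_iff_isUnit_det _).mp (linearIndependent_rows_iff_isUnit.mp hf)).ne_zero⟩

theorem injective_of_det_submatrix_ne_zero {m n ρ : Type*} [Fintype ρ] [DecidableEq ρ]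
    {A : Matrix m n K} {f : ρ → m} {g : ρ → n} (hdet : (A.submatrix f g).det ≠ 0) :
    Injective f := by
  intro a b hab
  by_contra hne
  exact hdet (det_zero_of_row_eq hne (by ext; simp [hab]))

end Minors

theorem exists_injective_forall_ne_of_card_add_eq {ρ ι : Type*} [Fintype ρ] [Fintype ι]
    {f : ρ → ι} (hf : Injective f) {k : ℕ} (hk : Fintype.card ρ + k = Fintype.card ι) :
    ∃ e : Fin k → ι, Injective e ∧ ∀ i t, e i ≠ f t := by
  classical
  have hcard : Fintype.card ↥(Set.range f)ᶜ = k := by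
    rw [Fintype.card_compl_set, Set.card_range_of_injective hf]
    omega
  let σ := Fintype.equivFinOfCardEq hcard
  exact ⟨fun i => σ.symm i, Subtype.val_injective.comp σ.symm.injective,
    fun i t h => (σ.symm i).2 ⟨t, h.symm⟩⟩

section MinorAnnihilator

variable {R ι ι' κ ρ : Type*} [CommRing R] [Fintype ι] [DecidableEq ι]

theorem one_submatrix_id_mul {n : Type*} (e : κ → ι) (M : Matrix ι n R) :
    (1 : Matrix ι ι R).submatrix e id * M = M.submatrix e id :=
  one_submatrix_mul e (Equiv.refl ι) M

variable [Fintype ρ] [DecidableEq ρ]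

def minorAnnihilator (A : Matrix ι ι' R) (f : ρ → ι) (g : ρ → ι') (e : κ → ι) :
    Matrix κ ι R :=
  (A.submatrix f g).det • (1 : Matrix ι ι R).submatrix e id -
    A.submatrix e g * (A.submatrix f g).adjugate * (1 : Matrix ι ι R).submatrix f id

variable (A : Matrix ι ι' R) (f : ρ → ι) (g : ρ → ι') (e : κ → ι)

theorem minorAnnihilator_mul_submatrix : minorAnnihilator A f g e * A.submatrix id g = 0 := by
  rw [minorAnnihilator, Matrix.sub_mul, Matrix.smul_mul, one_submatrix_id_mul, Matrix.mul_assoc,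
    one_submatrix_id_mul, submatrix_submatrix]
  simp [Matrix.mul_assoc, adjugate_mul]

theorem minorAnnihilator_mul_one_submatrix [DecidableEq κ] (he : Injective e)
    (hef : ∀ k t, e k ≠ f t) :
    minorAnnihilator A f g e * (1 : Matrix ι ι R).submatrix id e =
      (A.submatrix f g).det • 1 := by
  have hfe : (1 : Matrix ι ι R).submatrix f e = 0 := by
    ext t k
    exact one_apply_ne (hef k t).symm
  rw [minorAnnihilator, Matrix.sub_mul, Matrix.smul_mul, one_submatrix_id_mul, Matrix.mul_assoc,
    one_submatrix_id_mul, submatrix_submatrix]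
  simp [hfe, submatrix_one e he]

end MinorAnnihilator

section Exactness

variable {K ι ι' κ ρ : Type*} [Field K] [Fintype ρ] [DecidableEq ρ]
  {A : Matrix ι ι' K} {f : ρ → ι} {g : ρ → ι'} {e : κ → ι}

theorem injective_mulVec_submatrix_of_det_ne_zero (hdet : (A.submatrix f g).det ≠ 0) :
    Injective (A.submatrix id g).mulVec := by
  intro c c' h
  apply mulVec_injective_iff_isUnit.mpr ((isUnit_iff_isUnit_det _).mpr hdet.isUnit)
  exact congrArg (· ∘ f) h

variable [Fintype ι']

theorem range_mulVecLin_eq_submatrix (hA : A.rank ≤ Fintype.card ρ)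
    (hdet : (A.submatrix f g).det ≠ 0) :
    LinearMap.range A.mulVecLin = LinearMap.range (A.submatrix id g).mulVecLin := by
  symm
  apply eq_of_le_of_finrank_le
  · rw [range_mulVecLin, range_mulVecLin]
    exact span_mono (Set.range_comp_subset_range g A.col)
  · rw [LinearMap.finrank_range_of_inj (f := (A.submatrix id g).mulVecLin)
      (injective_mulVec_submatrix_of_det_ne_zero hdet), finrank_fintype_fun_eq_card]
    exact hA

theorem range_eq_ker_minorAnnihilator_and_surjective [Fintype ι] [DecidableEq ι] [Fintype κ]
    [DecidableEq κ] (hA : A.rank ≤ Fintype.card ρ) (hdet : (A.submatrix f g).det ≠ 0)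
    (he : Injective e) (hef : ∀ k t, e k ≠ f t)
    (hcard : Fintype.card κ + Fintype.card ρ = Fintype.card ι) :
    LinearMap.range A.mulVecLin = LinearMap.ker (minorAnnihilator A f g e).mulVecLin ∧
      Surjective (minorAnnihilator A f g e).mulVecLin := by
  set B := minorAnnihilator A f g e
  have hsurj : Surjective B.mulVecLin := fun y =>
    ⟨(1 : Matrix ι ι K).submatrix id e *ᵥ ((A.submatrix f g).det⁻¹ • y), by
      rw [mulVecLin_apply, mulVec_mulVec, minorAnnihilator_mul_one_submatrix A f g e he hef,
        smul_mulVec, one_mulVec, smul_smul, mul_inv_cancel₀ hdet, one_smul]⟩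
  have hker : finrank K (LinearMap.ker B.mulVecLin) = Fintype.card ρ := by
    have := LinearMap.finrank_range_add_finrank_ker B.mulVecLin
    rw [LinearMap.range_eq_top.mpr hsurj, finrank_top, finrank_fintype_fun_eq_card,
      finrank_fintype_fun_eq_card] at this
    omega
  refine ⟨?_, hsurj⟩
  rw [range_mulVecLin_eq_submatrix hA hdet]
  apply eq_of_le_of_finrank_le
  · rintro _ ⟨c, rfl⟩
    simp only [LinearMap.mem_ker, mulVecLin_apply, mulVec_mulVec, B,
      minorAnnihilator_mul_submatrix, zero_mulVec]
  · rw [hker, LinearMap.finrank_range_of_inj (f := (A.submatrix id g).mulVecLin)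
      (injective_mulVec_submatrix_of_det_ne_zero hdet), finrank_fintype_fun_eq_card]

end Exactness

section Differentiability

variable {𝕜 E : Type*} [NontriviallyNormedField 𝕜] [NormedAddCommGroup E] [NormedSpace 𝕜 E]
  {s : Set E} {l n o : Type*} [Fintype n]

theorem differentiableOn_mul_apply {M : E → Matrix l n 𝕜} {N : E → Matrix n o 𝕜}
    (hM : ∀ i j, DifferentiableOn 𝕜 (fun x => M x i j) s)
    (hN : ∀ i j, DifferentiableOn 𝕜 (fun x => N x i j) s) (i : l) (k : o) :
    DifferentiableOn 𝕜 (fun x => (M x * N x) i k) s := by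
  simp only [mul_apply]
  exact .fun_sum fun j _ => (hM i j).mul (hN j k)

variable [DecidableEq n]

theorem differentiableOn_det {M : E → Matrix n n 𝕜}
    (hM : ∀ i j, DifferentiableOn 𝕜 (fun x => M x i j) s) :
    DifferentiableOn 𝕜 (fun x => (M x).det) s := by
  simp only [det_apply]
  refine .fun_sum fun σ _ => .const_smul (fun x hx => ?_) _
  exact (HasFDerivWithinAt.finsetProd fun i _ =>
    (hM (σ i) i x hx).hasFDerivWithinAt).differentiableWithinAt

theorem differentiableOn_adjugate_apply {M : E → Matrix n n 𝕜}
    (hM : ∀ i j, DifferentiableOn 𝕜 (fun x => M x i j) s) (i j : n) :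
    DifferentiableOn 𝕜 (fun x => (M x).adjugate i j) s := by
  simp only [adjugate_apply]
  refine differentiableOn_det fun k l => ?_
  rcases eq_or_ne k j with rfl | hkj
  · simp [differentiableOn_const]
  · simpa [updateRow_ne hkj] using hM k l

theorem differentiableOn_minorAnnihilator_apply {ι ι' κ : Type*} [Fintype ι] [DecidableEq ι]
    {A : E → Matrix ι ι' 𝕜} (hA : ∀ i j, DifferentiableOn 𝕜 (fun x => A x i j) s)
    (f : n → ι) (g : n → ι') (e : κ → ι) (k : κ) (i : ι) :
    DifferentiableOn 𝕜 (fun x => minorAnnihilator (A x) f g e k i) s := by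
  have hminor : ∀ i j, DifferentiableOn 𝕜 (fun x => (A x).submatrix f g i j) s :=
    fun i j => hA (f i) (g j)
  simp only [minorAnnihilator, Matrix.sub_apply, Matrix.smul_apply, smul_eq_mul]
  exact ((differentiableOn_det hminor).mul (differentiableOn_const _)).sub <|
    differentiableOn_mul_apply (N := fun _ => (1 : Matrix ι ι 𝕜).submatrix f id)
      (differentiableOn_mul_apply (M := fun x => (A x).submatrix e g) (fun i j => hA (e i) (g j))
        (differentiableOn_adjugate_apply hminor))
      (fun _ _ => differentiableOn_const _) k i

end Differentiability

theorem isOpen_polydisc (m : ℕ) : IsOpen (polydisc m) := by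
  simp only [polydisc, Set.ofPred_forall]
  exact isOpen_iInter_of_finite fun i =>
    isOpen_lt (continuous_norm.comp (continuous_apply i)) continuous_const

theorem analyticSubsetOf_diff_setOf_ne_zero {m : ℕ} {Δ : Set (Fin m → ℂ)}
    {d : (Fin m → ℂ) → ℂ} (hd : DifferentiableOn ℂ d Δ) :
    AnalyticSubsetOf (Δ \ {w ∈ Δ | d w ≠ 0}) Δ :=
  ⟨Unit, fun _ => d, fun _ => hd, by ext w; simp⟩

theorem statement8_general {m p q r : ℕ}
    (A : (Fin m → ℂ) → Matrix (Fin p) (Fin q) ℂ)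
    (hA : ∀ i j, DifferentiableOn ℂ (fun w => A w i j) (polydisc m))
    (hle : ∀ w ∈ polydisc m, (A w).rank ≤ r)
    (hmax : ∃ w ∈ polydisc m, (A w).rank = r) :
    ∃ U : Set (Fin m → ℂ), IsOpen U ∧ U ⊆ polydisc m ∧
      AnalyticSubsetOf (polydisc m \ U) (polydisc m) ∧
      ∃ B : (Fin m → ℂ) → Matrix (Fin (p - r)) (Fin p) ℂ,
        (∀ k l, DifferentiableOn ℂ (fun w => B w k l) (polydisc m)) ∧
        ∀ w ∈ U, LinearMap.range (A w).mulVecLin = LinearMap.ker (B w).mulVecLin ∧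
          Function.Surjective (B w).mulVecLin := by
  obtain ⟨w₀, -, rfl⟩ := hmax
  obtain ⟨f, g, hdet₀⟩ := exists_det_submatrix_ne_zero (A w₀)
  have hcard : Fintype.card (Fin (A w₀).rank) + (p - (A w₀).rank) = Fintype.card (Fin p) := by
    simpa using Nat.add_sub_of_le (A w₀).rank_le_card_height
  obtain ⟨e, he, hef⟩ :=
    exists_injective_forall_ne_of_card_add_eq (injective_of_det_submatrix_ne_zero hdet₀) hcard
  set d := fun w => ((A w).submatrix f g).det
  have hd : DifferentiableOn ℂ d (polydisc m) := differentiableOn_det fun i j => hA (f i) (g j)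
  refine ⟨{w ∈ polydisc m | d w ≠ 0}, ?_, fun w hw => hw.1,
    analyticSubsetOf_diff_setOf_ne_zero hd, fun w => minorAnnihilator (A w) f g e,
    differentiableOn_minorAnnihilator_apply hA f g e,
    fun w hw => range_eq_ker_minorAnnihilator_and_surjective
      ((hle w hw.1).trans_eq (Fintype.card_fin _).symm) hw.2 he hef ?_⟩
  · exact hd.continuousOn.isOpen_inter_preimage (isOpen_polydisc m) isOpen_compl_singleton
  · simpa [add_comm] using hcard

/-- For a `p × q` matrix `A(w)` of holomorphic functions on the polydisc with maximal rank `r`,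
there is an open set `U` with analytic complement and a holomorphic `(p-r) × p` matrix `B(w)`
such that `ℂ^q → ℂ^p → ℂ^{p-r} → 0` is exact on `U`. -/
theorem statement8 {m p q r : ℕ} (hp : 0 < p) (hpq : p ≤ q)
    (A : (Fin m → ℂ) → Matrix (Fin p) (Fin q) ℂ)
    (hA : ∀ i j, DifferentiableOn ℂ (fun w => A w i j) (polydisc m))
    (hle : ∀ w ∈ polydisc m, (A w).rank ≤ r)
    (hmax : ∃ w ∈ polydisc m, (A w).rank = r) :
    ∃ U : Set (Fin m → ℂ), IsOpen U ∧ U ⊆ polydisc m ∧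
      AnalyticSubsetOf (polydisc m \ U) (polydisc m) ∧
      ∃ B : (Fin m → ℂ) → Matrix (Fin (p - r)) (Fin p) ℂ,
        (∀ k l, DifferentiableOn ℂ (fun w => B w k l) (polydisc m)) ∧
        ∀ w ∈ U, LinearMap.range (A w).mulVecLin = LinearMap.ker (B w).mulVecLin ∧
          Function.Surjective (B w).mulVecLin :=
  statement8_general A hA hle hmax
end
end
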